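/- Let R be a commutative ring with Spec R finite, and let M be any R-module. Then the natural map M → lim_{p ∈ Spec R} M_p (inverse limit over the poset of primes ordered by inclusion with localization transition maps) is an isomorphism. -/
import Mathlib


open LocalizedModule

variable {R : Type*} [CommRing R]

/-- The canonical localization map `M_p → M_q` for primes `q ⊆ p`. -/
noncomputable def specMap (M : Type*) [AddCommGroup M] [Module R M]
    (p q : PrimeSpectrum R) (h : q.asIdeal ≤ p.asIdeal) :
    LocalizedModule p.asIdeal.primeCompl M →ₗ[R] LocalizedModule q.asIdeal.primeCompl M :=
  LocalizedModule.lift _ (mkLinearMap q.asIdeal.primeCompl M)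
    (fun x => IsLocalizedModule.map_units (mkLinearMap q.asIdeal.primeCompl M)
      (⟨x.1, fun hx => x.2 (h hx)⟩ : q.asIdeal.primeCompl))

/-- A family of germs `(σ_p ∈ M_p)_p` is compatible with localization if the
localization maps `M_p → M_q` (for `q ⊆ p`) carry `σ_p` to `σ_q`. -/
def IsCompatible (M : Type*) [AddCommGroup M] [Module R M]
    (σ : ∀ p : PrimeSpectrum R, LocalizedModule p.asIdeal.primeCompl M) : Prop :=
  ∀ (p q : PrimeSpectrum R) (h : q.asIdeal ≤ p.asIdeal), specMap M p q h (σ p) = σ q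

lemma specMap_mk (M : Type*) [AddCommGroup M] [Module R M]
    (p q : PrimeSpectrum R) (h : q.asIdeal ≤ p.asIdeal) (m : M) :
    specMap M p q h (mkLinearMap p.asIdeal.primeCompl M m)
      = mkLinearMap q.asIdeal.primeCompl M m := by
  exact LinearMap.congr_fun (LocalizedModule.lift_comp p.asIdeal.primeCompl
    (mkLinearMap q.asIdeal.primeCompl M)
    (fun x => IsLocalizedModule.map_units (mkLinearMap q.asIdeal.primeCompl M)
      (⟨x.1, fun hx => x.2 (h hx)⟩ : q.asIdeal.primeCompl))) m

/-- The submodule of `∏_p M_p` consisting of families compatible with localization,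
i.e. the inverse limit `lim_{p ∈ Spec R} M_p` over the specialization order. -/
noncomputable def compatibleFamilies (M : Type*) [AddCommGroup M] [Module R M] :
    Submodule R (∀ p : PrimeSpectrum R, LocalizedModule p.asIdeal.primeCompl M) where
  carrier := {σ | IsCompatible M σ}
  add_mem' {a b} ha hb p q h := by simp [map_add, ha p q h, hb p q h]
  zero_mem' p q h := by simp
  smul_mem' r a ha p q h := by simp [map_smul, ha p q h]

/-- The natural `R`-linear map `M → lim_{p ∈ Spec R} M_p` sending `m` to the
compatible family of its germs `m/1`. -/
noncomputable def toCompatibleFamilies (M : Type*) [AddCommGroup M] [Module R M] :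
    M →ₗ[R] compatibleFamilies (R := R) M :=
  (LinearMap.pi (fun p : PrimeSpectrum R => mkLinearMap p.asIdeal.primeCompl M)).codRestrict
    (compatibleFamilies M) (fun m p q h => specMap_mk M p q h m)

/-! ### Auxiliary lemmas -/

section Aux

variable {M : Type*} [AddCommGroup M] [Module R M]

/-- An element `m/s` of `M_q` is zero iff `m` is killed by some `u ∉ q`. -/
lemma LocalizedModule.mk_eq_zero_iff' {q : PrimeSpectrum R} (m : M)
    (s : q.asIdeal.primeCompl) :
    LocalizedModule.mk m s = 0 ↔ ∃ u : q.asIdeal.primeCompl, (u : R) • m = 0 := by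
  constructor
  · intro h
    rw [← LocalizedModule.zero_mk (1 : q.asIdeal.primeCompl), LocalizedModule.mk_eq] at h
    obtain ⟨u, hu⟩ := h
    rw [smul_zero, smul_zero, one_smul] at hu
    exact ⟨u, by rwa [Submonoid.smul_def] at hu⟩
  · rintro ⟨u, hu⟩
    rw [← LocalizedModule.zero_mk s, LocalizedModule.mk_eq]
    refine ⟨u, ?_⟩
    rw [smul_zero, smul_zero, Submonoid.smul_def, Submonoid.smul_def, smul_comm,
      hu, smul_zero]

/-- Elements outside `q` act injectively on `M_q`. -/
lemma smul_eq_zero_of_compl {q : PrimeSpectrum R} {u : R} (hu : u ∉ q.asIdeal)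
    {x : LocalizedModule q.asIdeal.primeCompl M} (hx : u • x = 0) : x = 0 := by
  induction x using LocalizedModule.induction_on with
  | _ m s =>
    rw [LocalizedModule.smul'_mk] at hx
    rw [LocalizedModule.mk_eq_zero_iff'] at hx ⊢
    obtain ⟨v, hv⟩ := hx
    exact ⟨v * ⟨u, hu⟩, by simpa [mul_smul] using hv⟩

/-- `specMap` computed on `mk m s`. -/
lemma specMap_mk' (M : Type*) [AddCommGroup M] [Module R M]
    (p q : PrimeSpectrum R) (h : q.asIdeal ≤ p.asIdeal) (m : M) (s : p.asIdeal.primeCompl) :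
    specMap M p q h (LocalizedModule.mk m s)
      = LocalizedModule.mk m (⟨s.1, fun hs => s.2 (h hs)⟩ : q.asIdeal.primeCompl) := by
  have hs : (s : R) ∉ q.asIdeal := fun hs => s.2 (h hs)
  apply sub_eq_zero.mp
  apply smul_eq_zero_of_compl (M := M) hs
  rw [smul_sub, sub_eq_zero]
  have h1 : (s : R) • (LocalizedModule.mk m s : LocalizedModule p.asIdeal.primeCompl M)
      = LocalizedModule.mk m 1 := by
    rw [LocalizedModule.smul'_mk, ← Submonoid.smul_def, LocalizedModule.mk_cancel]
  have h2 : (s : R) • (LocalizedModule.mk m ⟨s.1, hs⟩ : LocalizedModule q.asIdeal.primeCompl M)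
      = LocalizedModule.mk m 1 := by
    rw [LocalizedModule.smul'_mk]
    exact LocalizedModule.mk_cancel (⟨s.1, hs⟩ : q.asIdeal.primeCompl) m
  rw [← map_smul, h1, h2]
  have := specMap_mk M p q h m
  simpa [LocalizedModule.mkLinearMap_apply] using this

lemma one_not_mem_prime (P : PrimeSpectrum R) : (1 : R) ∉ P.asIdeal :=
  (Ideal.ne_top_iff_one _).mp P.2.ne_top

/-- Key local lemma: if `y ∈ M_q` dies in every proper generization `M_{q'}` of `q`,
and `q ⊄ P`, then `y` is killed by some element outside `P`. -/
lemma exists_kill [Finite (PrimeSpectrum R)] (P q : PrimeSpectrum R) (hq : ¬ q ≤ P)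
    (y : LocalizedModule q.asIdeal.primeCompl M)
    (hy : ∀ q' : PrimeSpectrum R, (hlt : q' < q) → specMap M q q' hlt.le y = 0) :
    ∃ t : R, t ∉ P.asIdeal ∧ t • y = 0 := by
  classical
  have : Fintype (PrimeSpectrum R) := Fintype.ofFinite _
  set J : Ideal R := Ideal.torsionOf R _ y with hJdef
  -- J is not contained in any strictly smaller prime
  have hJ : ∀ q' : PrimeSpectrum R, q' < q → ¬ J ≤ q'.asIdeal := by
    intro q' hlt hle
    obtain ⟨m, s, rfl⟩ : ∃ m s, y = LocalizedModule.mk m s :=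
      LocalizedModule.induction_on (fun m s => ⟨m, s, rfl⟩) y
    have h0 := hy q' hlt
    rw [specMap_mk'] at h0
    obtain ⟨u, hu⟩ := (LocalizedModule.mk_eq_zero_iff' _ _).mp h0
    have huJ : (u : R) ∈ J := by
      rw [hJdef, Ideal.mem_torsionOf_iff, LocalizedModule.smul'_mk, hu,
        LocalizedModule.zero_mk]
    exact u.2 (hle huJ)
  -- prime avoidance
  let s0 : Finset (PrimeSpectrum R) := Finset.univ.filter (· < q)
  have hnsub : ¬ ((J : Set R) ⊆ ⋃ i ∈ (↑s0 : Set (PrimeSpectrum R)), (i.asIdeal : Set R)) := by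
    intro hsub
    obtain ⟨i, hi, hle⟩ := (Ideal.subset_union_prime q q
      (fun i _ _ _ => i.2)).mp hsub
    exact hJ i (by simpa [s0] using hi) hle
  obtain ⟨t₀, ht₀J, ht₀u⟩ := Set.not_subset.mp hnsub
  have ht₀ : ∀ q' : PrimeSpectrum R, q' < q → t₀ ∉ q'.asIdeal := by
    intro q' hlt hmem
    exact ht₀u (Set.mem_biUnion (by simpa [s0] using hlt) hmem)
  have ht₀y : t₀ • y = 0 := (Ideal.mem_torsionOf_iff _ _).mp ht₀J
  by_cases ht₀q : t₀ ∈ q.asIdeal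
  · -- the interesting case
    obtain ⟨se, hseq, hseP⟩ : ∃ se ∈ q.asIdeal, se ∉ P.asIdeal := by
      by_contra hcon
      push_neg at hcon
      exact hq fun x hx => hcon x hx
    -- the multiplicative set of elements u * se ^ N with u ∉ q
    let S : Submonoid R :=
      { carrier := {r | ∃ u : R, ∃ N : ℕ, u ∉ q.asIdeal ∧ r = u * se ^ N}
        one_mem' := ⟨1, 0, one_not_mem_prime q, by ring⟩
        mul_mem' := by
          rintro a b ⟨u, N, hu, rfl⟩ ⟨v, K, hv, rfl⟩
          exact ⟨u * v, N + K, fun h => (q.2.mem_or_mem h).elim hu hv, by ring⟩ }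
    have hndis : ¬ Disjoint (J : Set R) (S : Set R) := by
      intro hdis
      obtain ⟨P', hP'pr, hJP', hP'dis⟩ := Ideal.exists_le_prime_disjoint J S hdis
      have hP'q : P' ≤ q.asIdeal := by
        intro r hr
        by_contra hrq
        exact Set.disjoint_left.mp hP'dis hr ⟨r, 0, hrq, by ring⟩
      set Q : PrimeSpectrum R := ⟨P', hP'pr⟩ with hQ
      by_cases hQq : Q = q
      · refine Set.disjoint_left.mp hP'dis ?_ ⟨1, 1, one_not_mem_prime q, by ring⟩
        show se ∈ P'
        rw [show P' = Q.asIdeal from rfl, hQq]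
        exact hseq
      · have : Q < q := lt_of_le_of_ne hP'q hQq
        exact ht₀ Q this (hJP' ht₀J)
    obtain ⟨z, hzJ, u, N, huq, rfl⟩ := Set.not_disjoint_iff.mp hndis
    have : (u * se ^ N) • y = 0 := (Ideal.mem_torsionOf_iff _ _).mp hzJ
    rw [mul_smul] at this
    have hsy : (se ^ N) • y = 0 := smul_eq_zero_of_compl huq this
    exact ⟨se ^ N, fun h => hseP (P.2.mem_of_pow_mem _ h), hsy⟩
  · -- t₀ acts invertibly on M_q, so y = 0
    have : y = 0 := smul_eq_zero_of_compl ht₀q ht₀y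
    exact ⟨1, one_not_mem_prime P, by rw [this, smul_zero]⟩

/-- Global killing lemma: a compatible family vanishing at `P` is killed by a single
element outside `P`. -/
lemma exists_global_kill [Finite (PrimeSpectrum R)] (P : PrimeSpectrum R)
    (τ : ∀ p : PrimeSpectrum R, LocalizedModule p.asIdeal.primeCompl M)
    (hτ : IsCompatible M τ) (h0 : τ P = 0) :
    ∃ t : R, t ∉ P.asIdeal ∧ ∀ q, t • τ q = 0 := by
  classical
  have : Fintype (PrimeSpectrum R) := Fintype.ofFinite _
  have key : ∀ q : PrimeSpectrum R, ∃ t : R, t ∉ P.asIdeal ∧ ∀ q' ≤ q, t • τ q' = 0 := by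
    intro q
    induction q using WellFoundedLT.induction with
    | _ q IH =>
      by_cases hqP : q ≤ P
      · refine ⟨1, one_not_mem_prime P, fun q' hq' => ?_⟩
        have : τ q' = 0 := by
          rw [← hτ P q' (le_trans hq' hqP), h0, map_zero]
        rw [this, smul_zero]
      · choose f hf1 hf2 using IH
        let s0 : Finset (PrimeSpectrum R) := Finset.univ.filter (· < q)
        let t₁ : R := ∏ x ∈ s0.attach, f x.1 (Finset.mem_filter.mp x.2).2
        have ht₁P : t₁ ∉ P.asIdeal := by
          refine Finset.prod_induction _ (· ∉ P.asIdeal)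
            (fun a b ha hb hab => ((P.2.mem_or_mem hab).elim ha hb))
            (one_not_mem_prime P) (fun x _ => hf1 _ _)
        have ht₁kill : ∀ q' : PrimeSpectrum R, q' < q → t₁ • τ q' = 0 := by
          intro q' hlt
          have hmem : (⟨q', Finset.mem_filter.mpr ⟨Finset.mem_univ _, hlt⟩⟩ :
              {x // x ∈ s0}) ∈ s0.attach := Finset.mem_attach _ _
          rw [show t₁ = (∏ x ∈ s0.attach.erase _, f x.1 (Finset.mem_filter.mp x.2).2) *
              f q' hlt from (Finset.prod_erase_mul _ _ hmem).symm]
          rw [mul_smul, hf2 q' hlt q' le_rfl, smul_zero]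
        set y := t₁ • τ q with hy
        have hyv : ∀ q' : PrimeSpectrum R, (hlt : q' < q) → specMap M q q' hlt.le y = 0 := by
          intro q' hlt
          rw [hy, map_smul, hτ q q' hlt.le, ht₁kill q' hlt]
        obtain ⟨t', ht'P, ht'y⟩ := exists_kill P q hqP y hyv
        refine ⟨t' * t₁, fun h => ((P.2.mem_or_mem h).elim ht'P ht₁P), fun q' hq' => ?_⟩
        rcases lt_or_eq_of_le hq' with hlt | rfl
        · rw [mul_smul, ht₁kill q' hlt, smul_zero]
        · rw [mul_smul, ← hy, ht'y]
  choose g hg1 hg2 using key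
  refine ⟨∏ q, g q, ?_, ?_⟩
  · refine Finset.prod_induction _ (· ∉ P.asIdeal)
      (fun a b ha hb hab => ((P.2.mem_or_mem hab).elim ha hb))
      (one_not_mem_prime P) (fun x _ => hg1 _)
  · intro q
    rw [show (∏ q', g q') = (∏ q' ∈ Finset.univ.erase q, g q') * g q from
      (Finset.prod_erase_mul _ _ (Finset.mem_univ q)).symm]
    rw [mul_smul, hg2 q q le_rfl, smul_zero]

end Aux

/-- If `Spec R` is finite, then for any `R`-module `M` the natural map
`M → lim_{p ∈ Spec R} M_p` is an isomorphism. -/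
theorem bijective_of_finite_spec [Finite (PrimeSpectrum R)]
    (M : Type*) [AddCommGroup M] [Module R M] :
    Function.Bijective (toCompatibleFamilies (R := R) M) := by
  classical
  have hval : ∀ (m : M) (p : PrimeSpectrum R),
      ((toCompatibleFamilies (R := R) M m : compatibleFamilies (R := R) M) :
        ∀ p : PrimeSpectrum R, LocalizedModule p.asIdeal.primeCompl M) p
        = LocalizedModule.mk m 1 := fun m p => rfl
  constructor
  · -- injectivity
    have hinj : ∀ m : M, toCompatibleFamilies (R := R) M m = 0 → m = 0 := by
      intro m h
      set K : Ideal R := Ideal.torsionOf R M m with hKdef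
      have hK : ∀ 𝔪 : Ideal R, 𝔪.IsMaximal → ¬ K ≤ 𝔪 := by
        intro 𝔪 hmax hle
        set P : PrimeSpectrum R := ⟨𝔪, hmax.isPrime⟩
        have h0 : LocalizedModule.mk m (1 : P.asIdeal.primeCompl) = 0 := by
          have := congrFun (congrArg Subtype.val h) P
          rw [hval m P] at this
          simpa using this
        obtain ⟨u, hu⟩ := (LocalizedModule.mk_eq_zero_iff' m 1).mp h0
        exact u.2 (hle ((Ideal.mem_torsionOf_iff m (u : R)).mpr hu))
      have hKtop : K = ⊤ := by
        by_contra h'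
        obtain ⟨𝔪, hmax, hle⟩ := Ideal.exists_le_maximal K h'
        exact hK 𝔪 hmax hle
      have h1 : (1 : R) ∈ K := hKtop ▸ Submodule.mem_top
      have := (Ideal.mem_torsionOf_iff m (1 : R)).mp h1
      rwa [one_smul] at this
    intro a b hab
    have := hinj (a - b) (by rw [map_sub, hab, sub_self])
    exact sub_eq_zero.mp this
  · -- surjectivity
    intro σ
    let I : Ideal R :=
      { carrier := {a | ∃ m : M, ∀ p : PrimeSpectrum R,
          a • (σ : ∀ p : PrimeSpectrum R, LocalizedModule p.asIdeal.primeCompl M) p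
            = LocalizedModule.mk m 1}
        add_mem' := by
          rintro a b ⟨ma, hma⟩ ⟨mb, hmb⟩
          refine ⟨ma + mb, fun p => ?_⟩
          rw [add_smul, hma p, hmb p, LocalizedModule.mk_add_mk]
          simp
        zero_mem' := ⟨0, fun p => by rw [zero_smul, LocalizedModule.zero_mk]⟩
        smul_mem' := by
          rintro r a ⟨ma, hma⟩
          refine ⟨r • ma, fun p => ?_⟩
          rw [smul_eq_mul, mul_smul, hma p, LocalizedModule.smul'_mk] }
    have hImax : ∀ 𝔪 : Ideal R, 𝔪.IsMaximal → ¬ I ≤ 𝔪 := by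
      intro 𝔪 hmax hle
      set P : PrimeSpectrum R := ⟨𝔪, hmax.isPrime⟩ with hP
      have hsurj : ∀ x : LocalizedModule P.asIdeal.primeCompl M,
          ∃ m s, x = LocalizedModule.mk m s :=
        fun x => LocalizedModule.induction_on (fun m s => ⟨m, s, rfl⟩) x
      obtain ⟨m₀, s, hms⟩ := hsurj
        ((σ : ∀ p : PrimeSpectrum R, LocalizedModule p.asIdeal.primeCompl M) P)
      set τ : compatibleFamilies (R := R) M :=
        (s : R) • σ - toCompatibleFamilies (R := R) M m₀ with hτdef
      have hτ1 : ∀ p : PrimeSpectrum R,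
          (τ : ∀ p : PrimeSpectrum R, LocalizedModule p.asIdeal.primeCompl M) p
            = (s : R) • (σ : ∀ p : PrimeSpectrum R,
                LocalizedModule p.asIdeal.primeCompl M) p - LocalizedModule.mk m₀ 1 := by
        intro p
        rw [hτdef]
        simp only [Submodule.coe_sub, Submodule.coe_smul, Pi.sub_apply, Pi.smul_apply]
        rw [hval m₀ p]
      have hτP : (τ : ∀ p : PrimeSpectrum R, LocalizedModule p.asIdeal.primeCompl M) P = 0 := by
        rw [hτ1, hms, LocalizedModule.smul'_mk, ← Submonoid.smul_def,
          LocalizedModule.mk_cancel, sub_self]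
      obtain ⟨t, htP, htkill⟩ := exists_global_kill P _ τ.2 hτP
      have hts : (t * (s : R)) ∈ I := by
        refine ⟨t • m₀, fun p => ?_⟩
        have h1 := htkill p
        rw [hτ1 p, smul_sub, sub_eq_zero] at h1
        rw [mul_smul, ← LocalizedModule.smul'_mk]
        rw [← h1]
      exact (P.2.mem_or_mem (hle hts)).elim htP s.2
    have hItop : I = ⊤ := by
      by_contra h'
      obtain ⟨𝔪, hmax, hle⟩ := Ideal.exists_le_maximal I h'
      exact hImax 𝔪 hmax hle
    have h1 : (1 : R) ∈ I := hItop ▸ Submodule.mem_top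
    obtain ⟨m, hm⟩ := h1
    refine ⟨m, ?_⟩
    apply Subtype.ext
    funext p
    have := hm p
    rw [one_smul] at this
    exact (hval m p).trans this.symm
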